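/- arXiv:2303.13712 — 2 statements merged into one kernel-verified Lean document; each statement's English description precedes it below -/
import Mathlib

section
/- Full control in the LLO model: for every target value m ∈ [0,1] there exists a unique n ∈ [0,1] such that δ·n^γ / (δ·n^γ + (1-n)^γ) = m, where δ > 0 and γ ∈ (0,1]. -/
/-! On `[0, 1]` the decision function `δ n^γ / (δ n^γ + (1 - n)^γ)` is continuous, runs from `0`
to `1`, and is strictly increasing, since its numerator grows while the other summand of the
denominator shrinks. The intermediate value theorem gives a solution, strict monotonicity its
uniqueness. -/

open Real Set

theorem StrictMonoOn.existsUnique_eq_of_continuousOn {α β : Type*}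
    [ConditionallyCompleteLinearOrder α] [TopologicalSpace α] [OrderTopology α]
    [DenselyOrdered α] [LinearOrder β] [TopologicalSpace β] [OrderClosedTopology β]
    {f : α → β} {a b : α} (hab : a ≤ b) (hf : StrictMonoOn f (Icc a b))
    (hc : ContinuousOn f (Icc a b)) {y : β} (hy : y ∈ Icc (f a) (f b)) :
    ∃! x, x ∈ Icc a b ∧ f x = y := by
  obtain ⟨x, hx, rfl⟩ := intermediate_value_Icc hab hc hy
  exact ⟨x, ⟨hx, rfl⟩, fun x' ⟨hx', h⟩ => hf.injOn hx' hx h⟩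

theorem div_add_lt_div_add {K : Type*} [Field K] [LinearOrder K] [IsStrictOrderedRing K]
    {a a' b b' : K} (ha : 0 ≤ a) (ha' : 0 < a') (hb' : 0 ≤ b')
    (haa' : a ≤ a') (hbb' : b' < b) : a / (a + b) < a' / (a' + b') := by
  rw [div_lt_div_iff₀ (by linarith) (by linarith)]
  nlinarith [mul_le_mul_of_nonneg_right haa' hb', mul_lt_mul_of_pos_left hbb' ha']

noncomputable def judgeDecision (δ γ n : ℝ) : ℝ :=
  δ * n ^ γ / (δ * n ^ γ + (1 - n) ^ γ)

section judgeDecision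

variable {δ γ : ℝ}

theorem judgeDecision_zero (hγ : 0 < γ) : judgeDecision δ γ 0 = 0 := by
  simp [judgeDecision, zero_rpow hγ.ne']

theorem judgeDecision_one (hδ : 0 < δ) (hγ : 0 < γ) : judgeDecision δ γ 1 = 1 := by
  simp [judgeDecision, zero_rpow hγ.ne', hδ.ne']

theorem judgeDecision_denom_pos (hδ : 0 < δ) {n : ℝ} (hn : n ∈ Icc (0 : ℝ) 1) :
    0 < δ * n ^ γ + (1 - n) ^ γ := by
  have hnum : 0 ≤ δ * n ^ γ := mul_nonneg hδ.le (rpow_nonneg hn.1 γ)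
  rcases hn.2.lt_or_eq with hn1 | rfl
  · linarith [rpow_pos_of_pos (sub_pos.2 hn1) γ]
  · rw [one_rpow, mul_one, sub_self]
    exact add_pos_of_pos_of_nonneg hδ (rpow_nonneg le_rfl γ)

theorem strictMonoOn_judgeDecision (hδ : 0 < δ) (hγ : 0 < γ) :
    StrictMonoOn (judgeDecision δ γ) (Icc 0 1) := by
  intro n hn n' hn' hlt
  have hn'0 : 0 < n' := hn.1.trans_lt hlt
  exact div_add_lt_div_add (mul_nonneg hδ.le (rpow_nonneg hn.1 γ))
    (mul_pos hδ (rpow_pos_of_pos hn'0 γ)) (rpow_nonneg (sub_nonneg.2 hn'.2) γ)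
    (mul_le_mul_of_nonneg_left (rpow_le_rpow hn.1 hlt.le hγ.le) hδ.le)
    (rpow_lt_rpow (sub_nonneg.2 hn'.2) (by linarith) hγ)

theorem continuousOn_judgeDecision (hδ : 0 < δ) (hγ : 0 < γ) :
    ContinuousOn (judgeDecision δ γ) (Icc 0 1) := by
  have hpow : Continuous fun n : ℝ => n ^ γ := continuous_rpow_const hγ.le
  refine ContinuousOn.div (by fun_prop) (by fun_prop) fun n hn => ?_
  exact (judgeDecision_denom_pos hδ hn).ne'

end judgeDecision

theorem llo_full_control (δ γ : ℝ) (hδ : 0 < δ) (hγ : γ ∈ Set.Ioc (0:ℝ) 1)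
    (m : ℝ) (hm : m ∈ Set.Icc (0:ℝ) 1) :
    ∃! n : ℝ, n ∈ Set.Icc (0:ℝ) 1 ∧
      δ * n ^ γ / (δ * n ^ γ + (1 - n) ^ γ) = m := by
  have hγ0 := hγ.1
  refine (strictMonoOn_judgeDecision hδ hγ0).existsUnique_eq_of_continuousOn zero_le_one
    (continuousOn_judgeDecision hδ hγ0) ?_
  rwa [judgeDecision_zero hγ0, judgeDecision_one hδ hγ0]
end

section
/- For p ∈ (0,1), δ > 0, the ratio of the partial derivative of w(p) = δ p^γ/(δ p^γ+(1-p)^γ) with respect to γ to its partial derivative with respect to δ equals δ·(log p − log(1−p)), and in particular does not depend on γ. -/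
/-!
Both partial derivatives of `w = δ pᵞ / (δ pᵞ + (1 - p)ᵞ)` share the factor
`pᵞ (1 - p)ᵞ / (δ pᵞ + (1 - p)ᵞ)²`; the `γ`-derivative carries the extra factor
`δ (log p - log (1 - p))`, which is therefore the ratio.
-/

open Real

theorem hasDerivAt_mul_div_mul_add {a b d : ℝ} (hd : d * a + b ≠ 0) :
    HasDerivAt (fun x : ℝ => x * a / (x * a + b)) (a * b / (d * a + b) ^ 2) d := by
  have hnum : HasDerivAt (fun x : ℝ => x * a) a d := by
    simpa using (hasDerivAt_id d).mul_const a
  exact (hnum.div (hnum.add_const b) hd).congr_deriv (by ring)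

theorem hasDerivAt_mul_rpow_div_mul_rpow_add_rpow {p q d γ : ℝ} (hp : 0 < p) (hq : 0 < q)
    (hd : d * p ^ γ + q ^ γ ≠ 0) :
    HasDerivAt (fun c : ℝ => d * p ^ c / (d * p ^ c + q ^ c))
      (d * p ^ γ * q ^ γ * (log p - log q) / (d * p ^ γ + q ^ γ) ^ 2) γ := by
  have hnum : HasDerivAt (fun c : ℝ => d * p ^ c) (d * (p ^ γ * log p)) γ :=
    (hasStrictDerivAt_const_rpow hp γ).hasDerivAt.const_mul d
  have hqpow : HasDerivAt (fun c : ℝ => q ^ c) (q ^ γ * log q) γ :=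
    (hasStrictDerivAt_const_rpow hq γ).hasDerivAt
  have hden : HasDerivAt (fun c : ℝ => d * p ^ c + q ^ c)
      (d * (p ^ γ * log p) + q ^ γ * log q) γ :=
    hnum.add hqpow
  exact (hnum.div hden hd).congr_deriv (by ring)

theorem llo_deriv_ratio (δ γ p : ℝ) (hδ : 0 < δ) (hp : p ∈ Set.Ioo (0:ℝ) 1) :
    deriv (fun c : ℝ => δ * p ^ c / (δ * p ^ c + (1 - p) ^ c)) γ /
      deriv (fun d : ℝ => d * p ^ γ / (d * p ^ γ + (1 - p) ^ γ)) δ =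
    δ * (Real.log p - Real.log (1 - p)) := by
  obtain ⟨hp0, hp1⟩ := hp
  have hq0 : 0 < 1 - p := sub_pos.mpr hp1
  have hpγ : 0 < p ^ γ := rpow_pos_of_pos hp0 γ
  have hqγ : 0 < (1 - p) ^ γ := rpow_pos_of_pos hq0 γ
  have hden : δ * p ^ γ + (1 - p) ^ γ ≠ 0 := by positivity
  rw [(hasDerivAt_mul_rpow_div_mul_rpow_add_rpow hp0 hq0 hden).deriv,
    (hasDerivAt_mul_div_mul_add hden).deriv]
  field_simp
end
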